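/- arXiv:1202.0927 — 2 statements merged into one kernel-verified Lean document; each statement's English description precedes it below -/
import Mathlib

section
/- Let K = k(x) be the rational function field over a differential field k with derivation ∂_x trivial on k and ∂_x(x) = 1. Then every element of K/∂_x(K) has a unique representative of the form Σᵢ bᵢ/(x−cᵢ) with distinct cᵢ ∈ k and nonzero bᵢ ∈ k; equivalently, the k-linear map from the direct sum ⊕_{c∈k} k to K/∂_x(K) sending the basis vector at c to the class of 1/(x−c) is an isomorphism of k-vector spaces. -/
/-!
Surjectivity is partial fractions modulo derivatives: every polynomial is a derivative, and so is
every pole `(X - c)⁻ⁿ` of order `n ≥ 2`, so splitting off the top-order pole at a root of the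
denominator, one order at a time, leaves only simple poles.

Injectivity says that derivatives have no residues. Write `g = p / q` in lowest terms and
`q = (X - c)^μ v` with `v(c) ≠ 0`. If `μ = 0`, then `d g` has no pole at `c`; if `μ ≥ 1`, then
`p(c) ≠ 0` and the pole of `d g` at `c` has order exactly `μ + 1 ≥ 2`. So `d g` never has a simple
pole, whereas `∑ bᵢ / (X - cᵢ)` has one at every `cᵢ` with `bᵢ ≠ 0`.
-/

open Polynomial
open scoped RatFunc

theorem Polynomial.exists_derivative_eq {k : Type*} [Field k] [CharZero k] (p : k[X]) :
    ∃ P : k[X], derivative P = p := by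
  induction p using Polynomial.induction_on' with
  | add p q hp hq =>
    obtain ⟨P, rfl⟩ := hp
    obtain ⟨Q, rfl⟩ := hq
    exact ⟨P + Q, derivative_add⟩
  | monomial n a =>
    refine ⟨monomial (n + 1) (a / (n + 1)), ?_⟩
    rw [derivative_monomial, Nat.cast_add_one, div_mul_cancel₀ _ (Nat.cast_add_one_ne_zero n),
      Nat.add_sub_cancel]

theorem Polynomial.X_sub_C_mul_wronskian_X_sub_C_pow_mul {R : Type*} [CommRing R]
    (c : R) (μ : ℕ) (v p : R[X]) :
    (X - C c) * wronskian ((X - C c) ^ μ * v) p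
      = (X - C c) ^ μ * ((X - C c) * wronskian v p - C (μ : R) * v * p) := by
  cases μ with
  | zero => simp [wronskian]
  | succ m =>
    simp only [wronskian, derivative_mul, derivative_X_sub_C_pow, Nat.add_sub_cancel]
    push_cast
    ring

theorem Polynomial.wronskian_mul_X_sub_C_mul_ne {k : Type*} [Field k] [CharZero k]
    {p q N E : k[X]} {c : k} (hpq : IsCoprime p q) (hq : q ≠ 0) (hN : N.eval c ≠ 0)
    (hE : E.eval c ≠ 0) : wronskian q p * ((X - C c) * E) ≠ N * q ^ 2 := by
  intro h
  obtain ⟨v, hqv, hvc⟩ := q.exists_eq_pow_rootMultiplicity_mul_and_not_dvd hq c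
  set μ := q.rootMultiplicity c
  have hv : v.eval c ≠ 0 := mt dvd_iff_isRoot.mpr hvc
  have hW := X_sub_C_mul_wronskian_X_sub_C_pow_mul c μ v p
  rw [← hqv] at hW
  have key : ((X - C c) * wronskian v p - C (μ : k) * v * p) * E = N * (X - C c) ^ μ * v ^ 2 := by
    apply mul_left_cancel₀ (pow_ne_zero (μ + 1) (X_sub_C_ne_zero c))
    linear_combination (X - C c) * h - (X - C c) * E * hW
      + (X - C c) * N * (q + (X - C c) ^ μ * v) * hqv
  -- at `c` this reads `-μ v(c) p(c) E(c) = N(c) 0^μ v(c)²`, impossible for `μ = 0` and `μ ≥ 1`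
  have heval := congrArg (eval c) key
  simp only [eval_mul, eval_sub, eval_pow, eval_X, eval_C, sub_self, zero_mul, zero_sub] at heval
  rcases Nat.eq_zero_or_pos μ with hμ | hμ
  · rw [hμ] at heval
    simp [hN, hv] at heval
  · have hp : p.eval c ≠ 0 := fun hp ↦ not_isUnit_X_sub_C c <| hpq.isUnit_of_dvd'
      (dvd_iff_isRoot.mpr hp) (dvd_iff_isRoot.mpr ((rootMultiplicity_pos hq).mp hμ))
    rw [zero_pow hμ.ne'] at heval
    simp [hp, hv, hE, hμ.ne'] at heval

theorem Derivation.inv_pow_add_two_mem_range {k K : Type*} [Field k] [CharZero k] [Field K]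
    [Algebra k K] (d : Derivation k K K) {y : K} (hy : d y = 1) (n : ℕ) :
    (y ^ (n + 2))⁻¹ ∈ LinearMap.range (d : K →ₗ[k] K) := by
  have hy0 : y ≠ 0 := by rintro rfl; simp at hy
  have hn : algebraMap k K (n + 1) ≠ 0 := (_root_.map_ne_zero _).mpr (Nat.cast_add_one_ne_zero n)
  refine ⟨-((n + 1 : k)⁻¹ • (y ^ (n + 1))⁻¹), ?_⟩
  change d _ = _
  rw [map_neg, Derivation.map_smul, Derivation.leibniz_inv, Derivation.leibniz_pow, hy,
    ← Nat.cast_smul_eq_nsmul k, Nat.add_sub_cancel, Nat.cast_add_one]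
  simp only [Algebra.smul_def, Algebra.algebraMap_self, RingHom.id_apply, map_inv₀, mul_one]
  field_simp
  ring

section

variable {k : Type*} [Field k]

theorem RatFunc.algebraMap_X_sub_C (c : k) :
    algebraMap k[X] k⟮X⟯ (Polynomial.X - Polynomial.C c) = RatFunc.X - RatFunc.C c := by
  rw [map_sub, RatFunc.algebraMap_X (K := k), RatFunc.algebraMap_C]

theorem exists_div_X_sub_C_pow_succ_mul_eq {c : k} {v : k[X]} (hv : v.eval c ≠ 0)
    (p : k[X]) (m : ℕ) :
    ∃ (a : k) (p₁ : k[X]),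
      algebraMap k[X] k⟮X⟯ p / algebraMap k[X] k⟮X⟯ ((X - C c) ^ (m + 1) * v)
        = a • ((RatFunc.X - RatFunc.C c) ^ (m + 1))⁻¹
          + algebraMap k[X] k⟮X⟯ p₁ / algebraMap k[X] k⟮X⟯ ((X - C c) ^ m * v) := by
  set a := p.eval c / v.eval c
  have hroot : (p - C a * v).IsRoot c := by simp [a, hv]
  obtain ⟨p₁, hp₁⟩ := dvd_iff_isRoot.mpr hroot
  refine ⟨a, p₁, ?_⟩
  have hp : p = C a * v + (X - C c) * p₁ := by rw [← hp₁]; ring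
  have hy0 := RatFunc.algebraMap_ne_zero (X_sub_C_ne_zero c)
  have hv0 : algebraMap k[X] k⟮X⟯ v ≠ 0 := RatFunc.algebraMap_ne_zero (by rintro rfl; simp at hv)
  rw [← RatFunc.algebraMap_X_sub_C, RatFunc.smul_eq_C_mul, ← RatFunc.algebraMap_C, hp]
  simp only [map_add, map_mul, map_pow]
  field_simp
  ring

theorem smul_inv_X_sub_C_add_div (a c : k) (M E : k[X]) (hE : E ≠ 0) :
    a • (RatFunc.X - RatFunc.C c : k⟮X⟯)⁻¹ + algebraMap k[X] k⟮X⟯ M / algebraMap k[X] k⟮X⟯ E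
      = algebraMap k[X] k⟮X⟯ (C a * E + (X - C c) * M) / algebraMap k[X] k⟮X⟯ ((X - C c) * E) := by
  have hy0 := RatFunc.algebraMap_ne_zero (X_sub_C_ne_zero c)
  have hE0 := RatFunc.algebraMap_ne_zero hE
  rw [← RatFunc.algebraMap_X_sub_C, RatFunc.smul_eq_C_mul, ← RatFunc.algebraMap_C]
  simp only [map_add, map_mul]
  field_simp

theorem exists_sum_smul_inv_X_sub_C_eq_div (s : Finset k) (b : k → k) :
    ∃ M : k[X], ∑ c ∈ s, b c • (RatFunc.X - RatFunc.C c : k⟮X⟯)⁻¹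
      = algebraMap k[X] k⟮X⟯ M / algebraMap k[X] k⟮X⟯ (∏ c ∈ s, (X - C c)) := by
  classical
  induction s using Finset.induction_on with
  | empty => exact ⟨0, by simp⟩
  | insert a s ha ih =>
    obtain ⟨M, hM⟩ := ih
    refine ⟨C (b a) * ∏ c ∈ s, (X - C c) + (X - C a) * M, ?_⟩
    rw [Finset.sum_insert ha, Finset.prod_insert ha, hM, smul_inv_X_sub_C_add_div]
    exact Finset.prod_ne_zero_iff.mpr fun c _ ↦ X_sub_C_ne_zero c

variable (d : Derivation k k⟮X⟯ k⟮X⟯)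

theorem Derivation.map_algebraMap_polynomial (hd : d RatFunc.X = 1) (p : k[X]) :
    d (algebraMap k[X] k⟮X⟯ p) = algebraMap k[X] k⟮X⟯ (derivative p) := by
  rw [← RatFunc.aeval_X_left_eq_algebraMap, ← RatFunc.aeval_X_left_eq_algebraMap,
    Derivation.map_aeval, hd, smul_eq_mul, mul_one]

theorem Derivation.map_div_algebraMap (hd : d RatFunc.X = 1) (p q : k[X]) :
    d (algebraMap k[X] k⟮X⟯ p / algebraMap k[X] k⟮X⟯ q)
      = algebraMap k[X] k⟮X⟯ (wronskian q p) / algebraMap k[X] k⟮X⟯ (q ^ 2) := by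
  rw [Derivation.leibniz_div, d.map_algebraMap_polynomial hd, d.map_algebraMap_polynomial hd]
  simp only [wronskian, map_sub, map_mul, map_pow, smul_eq_mul]
  ring

theorem Derivation.map_X_sub_C (hd : d RatFunc.X = 1) (c : k) :
    d (RatFunc.X - RatFunc.C c) = 1 := by
  rw [map_sub, hd, ← RatFunc.algebraMap_eq_C, d.map_algebraMap, sub_zero]

theorem Derivation.algebraMap_mem_range [CharZero k] (hd : d RatFunc.X = 1) (p : k[X]) :
    algebraMap k[X] k⟮X⟯ p ∈ LinearMap.range (d : k⟮X⟯ →ₗ[k] k⟮X⟯) := by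
  obtain ⟨P, rfl⟩ := p.exists_derivative_eq
  exact ⟨algebraMap k[X] k⟮X⟯ P, d.map_algebraMap_polynomial hd P⟩

theorem Derivation.smul_inv_X_sub_C_pow_mem_range_sup_span [CharZero k] (hd : d RatFunc.X = 1)
    (a c : k) (m : ℕ) :
    a • ((RatFunc.X - RatFunc.C c : k⟮X⟯) ^ (m + 1))⁻¹ ∈ LinearMap.range (d : k⟮X⟯ →ₗ[k] k⟮X⟯)
      ⊔ Submodule.span k (Set.range fun c : k ↦ (RatFunc.X - RatFunc.C c : k⟮X⟯)⁻¹) := by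
  refine Submodule.smul_mem _ _ ?_
  cases m with
  | zero => exact Submodule.mem_sup_right (Submodule.subset_span ⟨c, by rw [zero_add, pow_one]⟩)
  | succ m => exact Submodule.mem_sup_left (d.inv_pow_add_two_mem_range (d.map_X_sub_C hd c) m)

theorem Derivation.div_mem_range_sup_span [CharZero k] [IsAlgClosed k] (hd : d RatFunc.X = 1)
    (p : k[X]) {q : k[X]} (hq : q ≠ 0) :
    algebraMap k[X] k⟮X⟯ p / algebraMap k[X] k⟮X⟯ q ∈ LinearMap.range (d : k⟮X⟯ →ₗ[k] k⟮X⟯)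
      ⊔ Submodule.span k (Set.range fun c : k ↦ (RatFunc.X - RatFunc.C c : k⟮X⟯)⁻¹) := by
  induction hn : q.natDegree using Nat.strong_induction_on generalizing p q with | _ n ih =>
  by_cases hdeg : q.degree = 0
  · obtain ⟨u, rfl⟩ : ∃ u, q = C u := ⟨_, eq_C_of_degree_eq_zero hdeg⟩
    rw [RatFunc.algebraMap_C, div_eq_inv_mul, ← map_inv₀, ← RatFunc.smul_eq_C_mul]
    exact Submodule.smul_mem _ _ (Submodule.mem_sup_left (d.algebraMap_mem_range hd p))
  obtain ⟨c, hc⟩ := IsAlgClosed.exists_root q hdeg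
  obtain ⟨v, hqv, hvc⟩ := q.exists_eq_pow_rootMultiplicity_mul_and_not_dvd hq c
  obtain ⟨m, hm⟩ := Nat.exists_eq_add_one.mpr ((rootMultiplicity_pos hq).mpr hc)
  rw [hm] at hqv
  subst hqv
  have hv : v.eval c ≠ 0 := mt dvd_iff_isRoot.mpr hvc
  have hv0 : v ≠ 0 := by rintro rfl; simp at hv
  have hXc : (X - C c) ^ m ≠ 0 := pow_ne_zero _ (X_sub_C_ne_zero c)
  obtain ⟨a, p₁, h⟩ := exists_div_X_sub_C_pow_succ_mul_eq hv p m
  rw [h]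
  refine add_mem (d.smul_inv_X_sub_C_pow_mem_range_sup_span hd a c m)
    (ih _ ?_ p₁ (mul_ne_zero hXc hv0) rfl)
  rw [← hn, natDegree_mul hXc hv0, natDegree_mul (pow_ne_zero _ (X_sub_C_ne_zero c)) hv0,
    natDegree_pow, natDegree_pow, natDegree_X_sub_C]
  omega

theorem Derivation.range_sup_span_inv_X_sub_C_eq_top [CharZero k] [IsAlgClosed k]
    (hd : d RatFunc.X = 1) :
    LinearMap.range (d : k⟮X⟯ →ₗ[k] k⟮X⟯)
      ⊔ Submodule.span k (Set.range fun c : k ↦ (RatFunc.X - RatFunc.C c : k⟮X⟯)⁻¹) = ⊤ := by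
  refine Submodule.eq_top_iff'.mpr fun f ↦ ?_
  rw [← RatFunc.num_div_denom f]
  exact d.div_mem_range_sup_span hd _ (RatFunc.denom_ne_zero f)

theorem Derivation.ne_div_X_sub_C_mul [CharZero k] (hd : d RatFunc.X = 1) (g : k⟮X⟯) {c : k}
    {N E : k[X]} (hN : N.eval c ≠ 0) (hE : E.eval c ≠ 0) :
    d g ≠ algebraMap k[X] k⟮X⟯ N / algebraMap k[X] k⟮X⟯ ((X - C c) * E) := by
  intro h
  have hE0 : E ≠ 0 := by rintro rfl; simp at hE
  rw [← RatFunc.num_div_denom g, d.map_div_algebraMap hd,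
    div_eq_div_iff (RatFunc.algebraMap_ne_zero (pow_ne_zero 2 (RatFunc.denom_ne_zero g)))
      (RatFunc.algebraMap_ne_zero (mul_ne_zero (X_sub_C_ne_zero c) hE0)), ← map_mul, ← map_mul] at h
  exact wronskian_mul_X_sub_C_mul_ne (RatFunc.isCoprime_num_denom g) (RatFunc.denom_ne_zero g) hN
    hE (RatFunc.algebraMap_injective k h)

theorem Derivation.eq_zero_of_linearCombination_inv_X_sub_C_mem_range [CharZero k]
    (hd : d RatFunc.X = 1) (b : k →₀ k)
    (hb : Finsupp.linearCombination k (fun c : k ↦ (RatFunc.X - RatFunc.C c : k⟮X⟯)⁻¹) b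
      ∈ LinearMap.range (d : k⟮X⟯ →ₗ[k] k⟮X⟯)) : b = 0 := by
  classical
  obtain ⟨g, hg⟩ := hb
  rw [Finsupp.linearCombination_apply, Finsupp.sum] at hg
  by_contra hb
  obtain ⟨c₀, hc₀⟩ := Finsupp.support_nonempty_iff.mpr hb
  obtain ⟨M, hM⟩ := exists_sum_smul_inv_X_sub_C_eq_div (b.support.erase c₀) b
  set E := ∏ c ∈ b.support.erase c₀, (X - C c)
  have hE : E.eval c₀ ≠ 0 := by
    simp only [E, eval_prod, eval_sub, eval_X, eval_C]
    exact Finset.prod_ne_zero_iff.mpr fun c hc ↦ sub_ne_zero.mpr (Finset.ne_of_mem_erase hc).symm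
  rw [← Finset.add_sum_erase _ _ hc₀, hM,
    smul_inv_X_sub_C_add_div _ _ _ _ (by rintro h; simp [h] at hE)] at hg
  refine d.ne_div_X_sub_C_mul hd g ?_ hE hg
  simpa using mul_ne_zero (Finsupp.mem_support_iff.mp hc₀) hE

end

/-- let `K = k(x)` over an algebraically closed field `k` of characteristic
zero, with `∂_x` the derivation trivial on `k` and `∂_x(x) = 1`.  The `k`-linear map
`⊕_{c ∈ k} k → K/∂_x(K)` sending the basis vector at `c` to the class of `1/(x−c)` is an
isomorphism of `k`-vector spaces (equivalently, every class has a unique representative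
`Σᵢ bᵢ/(x−cᵢ)`). -/
theorem stmt11 (k : Type*) [Field k] [CharZero k] [IsAlgClosed k]
    (d : Derivation k (RatFunc k) (RatFunc k)) (hd : d RatFunc.X = 1) :
    Function.Bijective
      (Finsupp.linearCombination k
        (fun c : k =>
          Submodule.Quotient.mk (p := LinearMap.range (d : RatFunc k →ₗ[k] RatFunc k))
            ((RatFunc.X - RatFunc.C c)⁻¹))) := by
  set R := LinearMap.range (d : RatFunc k →ₗ[k] RatFunc k)
  have hmkQ : (fun c : k ↦ Submodule.Quotient.mk (p := R) (RatFunc.X - RatFunc.C c)⁻¹)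
      = R.mkQ ∘ fun c : k ↦ (RatFunc.X - RatFunc.C c : k⟮X⟯)⁻¹ := rfl
  rw [hmkQ]
  constructor
  · rw [injective_iff_map_eq_zero]
    intro b hb
    rw [← Finsupp.apply_linearCombination, Submodule.mkQ_apply,
      Submodule.Quotient.mk_eq_zero] at hb
    exact d.eq_zero_of_linearCombination_inv_X_sub_C_mem_range hd b hb
  · rw [← LinearMap.range_eq_top, Finsupp.range_linearCombination, Set.range_comp,
      ← Submodule.map_span, Submodule.map_mkQ_eq_top]
    exact d.range_sup_span_inv_X_sub_C_eq_top hd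
end

section
/- In the field K = ℚ(t, x, z) where z² = x(x−1)(x−t), with derivations ∂_x and ∂_t extending the standard derivations on ℚ(t,x) (so that ∂_x(z) and ∂_t(z) are determined by z² = x(x−1)(x−t)), the element b = 1/z satisfies D(b) = ∂_x(a), where D = −2t(t−1)∂_t² − (4t−2)∂_t − 1/2 and a = z/(x−t)². -/
/-!
Everything is computed in closed form. Since `t` does not occur in `c = -x(x-1)`, the relation
`2z ∂_t z = c` gives `∂_t z⁻¹ = -c/(2z³)` and `∂_t² z⁻¹ = 3c²/(4z⁵)`, while `∂_x(x-t) = 1` gives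
`∂_x(z/(x-t)²) = ∂_x z/(x-t)² - 2z/(x-t)³` with `∂_x z = ∂_x(z²)/(2z)`. After clearing denominators
only even powers of `z` remain, and substituting `z² = x(x-1)(x-t)` leaves a polynomial identity
in `x` and `t`.
-/

namespace Derivation

variable {R K : Type*} [CommRing R] [Field K] [Algebra R K] (D : Derivation R K K)

theorem map_eq_div_of_two_mul_mul_map_eq [NeZero (2 : K)] {z c : K} (hz : z ≠ 0)
    (h : 2 * z * D z = c) : D z = c / (2 * z) := by
  rw [eq_div_iff (mul_ne_zero two_ne_zero hz)]
  linear_combination h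

theorem map_inv_of_two_mul_mul_map_eq [NeZero (2 : K)] {z c : K} (hz : z ≠ 0)
    (h : 2 * z * D z = c) : D z⁻¹ = -c / (2 * z ^ 3) := by
  rw [leibniz_inv, map_eq_div_of_two_mul_mul_map_eq D hz h, smul_eq_mul]
  field_simp

theorem map_map_inv_of_two_mul_mul_map_eq [NeZero (2 : K)] {z c : K} (hz : z ≠ 0)
    (hc : D c = 0) (h : 2 * z * D z = c) : D (D z⁻¹) = 3 * c ^ 2 / (4 * z ^ 5) := by
  have h2 : D (2 : K) = 0 := by exact_mod_cast D.map_natCast 2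
  have h4 : (4 : K) ≠ 0 := by
    rw [show (4 : K) = 2 * 2 by norm_num]
    exact mul_ne_zero two_ne_zero two_ne_zero
  rw [map_inv_of_two_mul_mul_map_eq D hz h, leibniz_div, map_neg, hc, leibniz, h2, leibniz_pow,
    map_eq_div_of_two_mul_mul_map_eq D hz h]
  simp only [smul_eq_mul, neg_zero, mul_zero, add_zero, nsmul_eq_mul, Nat.cast_ofNat]
  field_simp
  ring

theorem map_mul_inv_sq_of_map_eq_one {z u : K} (hu : u ≠ 0) (hDu : D u = 1) :
    D (z * (u ^ 2)⁻¹) = D z / u ^ 2 - 2 * z / u ^ 3 := by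
  rw [leibniz, leibniz_inv, leibniz_pow, hDu]
  simp only [smul_eq_mul, nsmul_eq_mul, Nat.cast_ofNat]
  field_simp
  ring

end Derivation

theorem stmt12_general (K : Type*) [Field K] [CharZero K]
    (dx dt : Derivation ℤ K K) (x t z : K)
    (hxx : dx x = 1) (hxt : dx t = 0) (htx : dt x = 0)
    (hz : z ^ 2 = x * (x - 1) * (x - t)) (hz0 : z ≠ 0) (hxt0 : x - t ≠ 0)
    (hdxz : 2 * z * dx z = dx (x * (x - 1) * (x - t)))
    (hdtz : 2 * z * dt z = -(x * (x - 1))) :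
    -2 * t * (t - 1) * dt (dt z⁻¹) - (4 * t - 2) * dt z⁻¹ - (1 / 2) * z⁻¹ =
      dx (z * ((x - t) ^ 2)⁻¹) := by
  have hdt_c : dt (-(x * (x - 1))) = 0 := by simp [htx]
  have hdx_u : dx (x - t) = 1 := by simp [hxx, hxt]
  have hdx_g : dx (x * (x - 1) * (x - t)) = (x - 1) * (x - t) + x * (x - t) + x * (x - 1) := by
    simp only [Derivation.leibniz, map_sub, hxx, hxt, sub_zero, smul_eq_mul, mul_one,
      Derivation.map_one_eq_zero]
    ring
  rw [dt.map_map_inv_of_two_mul_mul_map_eq hz0 hdt_c hdtz,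
    dt.map_inv_of_two_mul_mul_map_eq hz0 hdtz, dx.map_mul_inv_sq_of_map_eq_one hxt0 hdx_u,
    dx.map_eq_div_of_two_mul_mul_map_eq hz0 hdxz, hdx_g]
  field_simp
  rw [show z ^ 4 = (z ^ 2) ^ 2 by ring, hz]
  ring

/-- in the field `K = ℚ(t,x,z)` with `z² = x(x−1)(x−t)` and the derivations
`∂_x, ∂_t` extending the standard ones (so `2z∂_x(z) = ∂_x(x(x−1)(x−t))` and
`2z∂_t(z) = −x(x−1)`), the element `b = 1/z` satisfies `D(b) = ∂_x(a)` with
`D = −2t(t−1)∂_t² − (4t−2)∂_t − 1/2` and `a = z/(x−t)²`.  (Formalized in any field of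
characteristic zero containing such elements with such derivations.) -/
theorem stmt12 (K : Type*) [Field K] [CharZero K]
    (dx dt : Derivation ℤ K K) (x t z : K)
    (hxx : dx x = 1) (hxt : dx t = 0) (htx : dt x = 0) (htt : dt t = 1)
    (hcomm : ∀ f : K, dx (dt f) = dt (dx f))
    (hz : z ^ 2 = x * (x - 1) * (x - t)) (hz0 : z ≠ 0) (hxt0 : x - t ≠ 0)
    (hdxz : 2 * z * dx z = dx (x * (x - 1) * (x - t)))
    (hdtz : 2 * z * dt z = -(x * (x - 1))) :
    -2 * t * (t - 1) * dt (dt z⁻¹) - (4 * t - 2) * dt z⁻¹ - (1 / 2) * z⁻¹ =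
      dx (z * ((x - t) ^ 2)⁻¹) :=
  stmt12_general K dx dt x t z hxx hxt htx hz hz0 hxt0 hdxz hdtz
end
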